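/- Let x₁, x₂, x₃, x₄ denote the images of the four free generators in the free Burnside group B(4,3), and for i ∈ {1,2,3,4} let Q_i = x₁x₂⁻¹x₃x₄⁻¹ · x₁⁻¹x₂x₃⁻¹x₄ · x_i · x₄x₃⁻¹x₂x₁⁻¹ · x₄⁻¹x₃x₂⁻¹x₁. Then the quotient of B(4,3) by the normal closure of {Q_i x_i⁻¹ : i = 1,2,3,4} is not isomorphic to the free Burnside group B(k,3) for any natural number k. -/

import Mathlib

/-!
A homomorphism from `B(k,3)` to a finite group `H` of exponent 3 is an arbitrary `k`-tuple
in `H`, so there are `|H|^k` of them; one from `BurnsideDelta` is a 4-tuple satisfying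
`Q_i = x_i`. Every relator `Q_i x_i⁻¹` dies in an abelian group, so counting maps to `ℤ/3`
forces `k = 4`. In a group of exponent 3 and nilpotency class 3 (a model of `B(3,3)`) the
tuple of generators completed by `1` violates a relation, so `BurnsideDelta` has fewer
maps to it than `B(4,3)`.
-/

/-- The free Burnside group `B(r, n)`: the quotient of the free group on `r` generators
by the normal closure of the set of all `n`-th powers. -/
abbrev FreeBurnsideGroup (r n : ℕ) : Type :=
  FreeGroup (Fin r) ⧸
    Subgroup.normalClosure {x : FreeGroup (Fin r) | ∃ w : FreeGroup (Fin r), x = w ^ n}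

/-- The image of the `i`-th free generator in `B(4,3)`. -/
def burnsideGen (i : Fin 4) : FreeBurnsideGroup 4 3 :=
  QuotientGroup.mk (FreeGroup.of i)

/-- The element `Q_i = x₁x₂⁻¹x₃x₄⁻¹ · x₁⁻¹x₂x₃⁻¹x₄ · x_i · x₄x₃⁻¹x₂x₁⁻¹ · x₄⁻¹x₃x₂⁻¹x₁`
of `B(4,3)` (here the generators are indexed `x₁ = burnsideGen 0, …, x₄ = burnsideGen 3`). -/
def wordQ (i : Fin 4) : FreeBurnsideGroup 4 3 :=
  let x₁ := burnsideGen 0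
  let x₂ := burnsideGen 1
  let x₃ := burnsideGen 2
  let x₄ := burnsideGen 3
  x₁ * x₂⁻¹ * x₃ * x₄⁻¹ * x₁⁻¹ * x₂ * x₃⁻¹ * x₄ * burnsideGen i *
    x₄ * x₃⁻¹ * x₂ * x₁⁻¹ * x₄⁻¹ * x₃ * x₂⁻¹ * x₁

/-- The quotient of `B(4,3)` by the normal closure of `{Q_i x_i⁻¹ : i = 1,…,4}`: the third
Burnside group of the closure of the 5-braid `Δ₅⁴ = (σ₁σ₂σ₃σ₄)¹⁰`. -/
abbrev BurnsideDelta : Type :=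
  FreeBurnsideGroup 4 3 ⧸
    Subgroup.normalClosure {g : FreeBurnsideGroup 4 3 |
      ∃ i : Fin 4, g = wordQ i * (burnsideGen i)⁻¹}

section QuotientNormalClosure

variable {G M : Type*} [Group G] [Group M]

def monoidHomQuotientNormalClosureEquiv (s : Set G) :
    (G ⧸ Subgroup.normalClosure s →* M) ≃ {φ : G →* M // ∀ x ∈ s, φ x = 1} where
  toFun ψ := ⟨ψ.comp (QuotientGroup.mk' _), fun x hx => by
    simp [(QuotientGroup.eq_one_iff x).2 (Subgroup.subset_normalClosure hx)]⟩
  invFun φ := QuotientGroup.lift _ φ.1 (Subgroup.normalClosure_le_normal φ.2)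
  left_inv ψ := QuotientGroup.monoidHom_ext _ rfl
  right_inv φ := rfl

end QuotientNormalClosure

namespace FreeBurnsideGroup

variable {M : Type*} [Group M] {n : ℕ}

def monoidHomEquiv (hM : ∀ g : M, g ^ n = 1) (r : ℕ) :
    (FreeBurnsideGroup r n →* M) ≃ (Fin r → M) :=
  (monoidHomQuotientNormalClosureEquiv _).trans <|
    (Equiv.subtypeUnivEquiv fun φ => by rintro _ ⟨w, rfl⟩; rw [map_pow, hM]).trans
      FreeGroup.lift.symm

lemma card_monoidHom (hM : ∀ g : M, g ^ n = 1) (r : ℕ) :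
    Nat.card (FreeBurnsideGroup r n →* M) = Nat.card M ^ r := by
  rw [Nat.card_congr (monoidHomEquiv hM r), Nat.card_fun, Nat.card_fin]

end FreeBurnsideGroup

def evalWordQ {G : Type*} [Group G] (x : Fin 4 → G) (i : Fin 4) : G :=
  x 0 * (x 1)⁻¹ * x 2 * (x 3)⁻¹ * (x 0)⁻¹ * x 1 * (x 2)⁻¹ * x 3 * x i *
    x 3 * (x 2)⁻¹ * x 1 * (x 0)⁻¹ * (x 3)⁻¹ * x 2 * (x 1)⁻¹ * x 0

lemma wordQ_eq_evalWordQ (i : Fin 4) : wordQ i = evalWordQ burnsideGen i :=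
  rfl

lemma map_evalWordQ {G M : Type*} [Group G] [Group M] (φ : G →* M) (x : Fin 4 → G)
    (i : Fin 4) :
    φ (evalWordQ x i) = evalWordQ (φ ∘ x) i := by
  simp [evalWordQ]

lemma evalWordQ_of_comm {G : Type*} [CommGroup G] (x : Fin 4 → G) (i : Fin 4) :
    evalWordQ x i = x i := by
  simp [evalWordQ, mul_comm, mul_assoc, mul_left_comm]

namespace BurnsideDelta

variable {M : Type*} [Group M]

def monoidHomEquiv (hM : ∀ g : M, g ^ 3 = 1) :
    (BurnsideDelta →* M) ≃ {x : Fin 4 → M // ∀ i, evalWordQ x i = x i} :=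
  (monoidHomQuotientNormalClosureEquiv _).trans <|
    (FreeBurnsideGroup.monoidHomEquiv hM 4).subtypeEquiv fun φ => by
      have hgen : φ ∘ burnsideGen = FreeBurnsideGroup.monoidHomEquiv hM 4 φ := rfl
      simp [← hgen, ← map_evalWordQ, wordQ_eq_evalWordQ, mul_inv_eq_one]

lemma card_monoidHom (hM : ∀ g : M, g ^ 3 = 1) :
    Nat.card (BurnsideDelta →* M) = Nat.card {x : Fin 4 → M // ∀ i, evalWordQ x i = x i} :=
  Nat.card_congr (monoidHomEquiv hM)

lemma card_monoidHom_of_comm {M : Type*} [CommGroup M] (hM : ∀ g : M, g ^ 3 = 1) :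
    Nat.card (BurnsideDelta →* M) = Nat.card M ^ 4 := by
  rw [card_monoidHom hM, Nat.card_congr (Equiv.subtypeUnivEquiv fun x i => evalWordQ_of_comm x i),
    Nat.card_fun, Nat.card_fin]

lemma card_monoidHom_lt [Finite M] (hM : ∀ g : M, g ^ 3 = 1) {x : Fin 4 → M} {i : Fin 4}
    (hx : evalWordQ x i ≠ x i) : Nat.card (BurnsideDelta →* M) < Nat.card M ^ 4 := by
  rw [card_monoidHom hM]
  calc Nat.card {x : Fin 4 → M // ∀ i, evalWordQ x i = x i}
      < Nat.card (Fin 4 → M) := Finite.card_subtype_lt fun h => hx (h i)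
    _ = Nat.card M ^ 4 := by rw [Nat.card_fun, Nat.card_fin]

lemma eq_four_of_mulEquiv {k : ℕ} (e : BurnsideDelta ≃* FreeBurnsideGroup k 3) : k = 4 := by
  have hM : ∀ g : Multiplicative (ZMod 3), g ^ 3 = 1 := by decide
  have hcard := Nat.card_congr (e.monoidHomCongrLeftEquiv (N := Multiplicative (ZMod 3)))
  have h3 : Nat.card (Multiplicative (ZMod 3)) = 3 := by simp [Nat.card_eq_fintype_card]
  rw [card_monoidHom_of_comm hM, FreeBurnsideGroup.card_monoidHom hM, h3] at hcard
  exact (Nat.pow_right_injective (by norm_num) hcard).symm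

end BurnsideDelta

/-- A coordinate model of `B(3,3)` (order `3^7`, class 3): `aᵢ` for the abelianization,
`bᵢⱼ` for the commutators `[xᵢ, xⱼ]`, `d` for the commutator of weight three. -/
@[ext]
structure BurnsideModel where
  a₁ : ZMod 3
  a₂ : ZMod 3
  a₃ : ZMod 3
  b₂₁ : ZMod 3
  b₃₁ : ZMod 3
  b₃₂ : ZMod 3
  d : ZMod 3
deriving DecidableEq

namespace BurnsideModel

instance : Finite BurnsideModel :=
  Finite.of_injective (fun g => (g.a₁, g.a₂, g.a₃, g.b₂₁, g.b₃₁, g.b₃₂, g.d)) fun g h hgh => by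
    simp only [Prod.mk.injEq] at hgh
    ext <;> tauto

instance : One BurnsideModel := ⟨⟨0, 0, 0, 0, 0, 0, 0⟩⟩

instance : Mul BurnsideModel :=
  ⟨fun g h =>
    ⟨g.a₁ + h.a₁, g.a₂ + h.a₂, g.a₃ + h.a₃,
     g.b₂₁ + h.b₂₁ + g.a₂ * h.a₁,
     g.b₃₁ + h.b₃₁ + g.a₃ * h.a₁,
     g.b₃₂ + h.b₃₂ + g.a₃ * h.a₂,
     g.d + h.d + g.b₃₂ * h.a₁ - g.b₃₁ * h.a₂ + g.b₂₁ * h.a₃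
       - g.a₃ * h.a₁ * h.a₂ + g.a₂ * h.a₁ * h.a₃ + g.a₂ * g.a₃ * h.a₁⟩⟩

instance : Inv BurnsideModel :=
  ⟨fun g =>
    ⟨-g.a₁, -g.a₂, -g.a₃,
     -g.b₂₁ + g.a₁ * g.a₂, -g.b₃₁ + g.a₁ * g.a₃, -g.b₃₂ + g.a₂ * g.a₃,
     -g.d + g.a₃ * g.b₂₁ - g.a₂ * g.b₃₁ + g.a₁ * g.b₃₂ + g.a₁ * g.a₂ * g.a₃⟩⟩

lemma one_def : (1 : BurnsideModel) = ⟨0, 0, 0, 0, 0, 0, 0⟩ := rfl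

lemma mul_def (g h : BurnsideModel) :
    g * h =
      ⟨g.a₁ + h.a₁, g.a₂ + h.a₂, g.a₃ + h.a₃,
       g.b₂₁ + h.b₂₁ + g.a₂ * h.a₁,
       g.b₃₁ + h.b₃₁ + g.a₃ * h.a₁,
       g.b₃₂ + h.b₃₂ + g.a₃ * h.a₂,
       g.d + h.d + g.b₃₂ * h.a₁ - g.b₃₁ * h.a₂ + g.b₂₁ * h.a₃
         - g.a₃ * h.a₁ * h.a₂ + g.a₂ * h.a₁ * h.a₃ + g.a₂ * g.a₃ * h.a₁⟩ :=
  rfl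

lemma inv_def (g : BurnsideModel) :
    g⁻¹ =
      ⟨-g.a₁, -g.a₂, -g.a₃,
       -g.b₂₁ + g.a₁ * g.a₂, -g.b₃₁ + g.a₁ * g.a₃, -g.b₃₂ + g.a₂ * g.a₃,
       -g.d + g.a₃ * g.b₂₁ - g.a₂ * g.b₃₁ + g.a₁ * g.b₃₂ + g.a₁ * g.a₂ * g.a₃⟩ :=
  rfl

instance : Group BurnsideModel :=
  Group.ofLeftAxioms
    (fun g h k => by
      ext <;> simp only [mul_def]
      case d => linear_combination (g.a₃ * h.a₂ * k.a₁) * ZMod.natCast_self 3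
      all_goals ring)
    (fun g => by ext <;> simp [mul_def, one_def])
    (fun g => by
      ext <;> simp only [mul_def, inv_def, one_def]
      case d => linear_combination (g.a₁ * g.a₂ * g.a₃) * ZMod.natCast_self 3
      all_goals ring)

lemma pow_three_eq_one (g : BurnsideModel) : g ^ 3 = 1 := by
  rw [_root_.pow_three]
  ext <;> simp only [mul_def, one_def]
  · linear_combination g.a₁ * ZMod.natCast_self 3
  · linear_combination g.a₂ * ZMod.natCast_self 3
  · linear_combination g.a₃ * ZMod.natCast_self 3
  · linear_combination (g.b₂₁ + g.a₁ * g.a₂) * ZMod.natCast_self 3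
  · linear_combination (g.b₃₁ + g.a₁ * g.a₃) * ZMod.natCast_self 3
  · linear_combination (g.b₃₂ + g.a₂ * g.a₃) * ZMod.natCast_self 3
  · linear_combination
      (g.d + g.a₁ * g.b₃₂ - g.a₂ * g.b₃₁ + g.a₃ * g.b₂₁ + g.a₁ * g.a₂ * g.a₃) * ZMod.natCast_self 3

def generatorsAndOne : Fin 4 → BurnsideModel :=
  ![⟨1, 0, 0, 0, 0, 0, 0⟩, ⟨0, 1, 0, 0, 0, 0, 0⟩, ⟨0, 0, 1, 0, 0, 0, 0⟩, 1]

set_option maxRecDepth 4000 in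
lemma evalWordQ_generatorsAndOne_ne :
    evalWordQ generatorsAndOne 3 ≠ generatorsAndOne 3 := by
  decide

end BurnsideModel

/-- The quotient of `B(4,3)` by the relations `Q_i x_i⁻¹` is not isomorphic to any free
Burnside group `B(k,3)`; hence the closure of `Δ₅⁴` is not 3-move reducible to a trivial
link, disproving the Montesinos–Nakanishi conjecture. -/
theorem burnsideDelta_not_iso_freeBurnside :
    ∀ k : ℕ, IsEmpty (BurnsideDelta ≃* FreeBurnsideGroup k 3) := by
  refine fun k => ⟨fun e => ?_⟩
  obtain rfl := BurnsideDelta.eq_four_of_mulEquiv e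
  have hcard := Nat.card_congr (e.monoidHomCongrLeftEquiv (N := BurnsideModel))
  rw [FreeBurnsideGroup.card_monoidHom BurnsideModel.pow_three_eq_one] at hcard
  exact (BurnsideDelta.card_monoidHom_lt BurnsideModel.pow_three_eq_one
    BurnsideModel.evalWordQ_generatorsAndOne_ne).ne hcard
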